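/- arXiv:1408.0028 — 3 statements merged into one kernel-verified Lean document; each statement's English description precedes it below -/
import Mathlib

section
/- Let F : A → B be an additive functor between abelian categories which admits a right adjoint U : B → A that is exact, and let M = UF be the monad on A defined by this adjoint pair. Then the comparison functor K : B → M-Mod_A is an equivalence of categories if and only if the functor U is faithful. -/
/-!
Since `K ⋙ forget ≅ U`, faithfulness of `K` and of `U` are equivalent. If `U` is faithful, every
counit `ε_Y : FUY ⟶ Y` is an epimorphism (its image under `U` is split by the unit), hence a
regular epimorphism in the abelian category `B`. A morphism of algebras `f : UX ⟶ UY` then makes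
`F f ≫ ε_Y` coequalize the pair presenting `ε_X` (test this after applying the faithful `U`), so it
descends to `g : X ⟶ Y` with `U g = f`: `K` is full. Finally an algebra `(A, a)` is `K` of the
coequalizer `P` of `F a, ε_{FA} : FUFA ⇉ FA`: as `U` preserves coequalizers, `UP` is the
coequalizer of `UFa, Uε_{FA}`, which is `a : UFA ⟶ A` itself, split by the unit.
-/

open CategoryTheory CategoryTheory.Limits

namespace CategoryTheory.Monad

variable {C D : Type*} [Category C] [Category D] {F : C ⥤ D} {G : D ⥤ C} (adj : F ⊣ G)

lemma faithful_of_comparison_faithful [(comparison adj).Faithful] : G.Faithful :=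
  Functor.Faithful.of_iso (comparisonForget adj)

instance isSplitEpi_map_counit_app (Y : D) : IsSplitEpi (G.map (adj.counit.app Y)) :=
  ⟨⟨⟨_, adj.right_triangle_components Y⟩⟩⟩

lemma epi_counit_app_of_faithful [G.Faithful] (Y : D) : Epi (adj.counit.app Y) :=
  G.epi_of_epi_map inferInstance

lemma exists_map_eq_of_comp_counit [G.Faithful] [IsRegularEpiCategory D] {X Y : D}
    (f : G.obj X ⟶ G.obj Y)
    (hf : G.map (F.map f) ≫ G.map (adj.counit.app Y) = G.map (adj.counit.app X) ≫ f) :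
    ∃ g : X ⟶ Y, G.map g = f := by
  have := epi_counit_app_of_faithful adj X
  have := IsRegularEpiCategory.regularEpiOfEpi (adj.counit.app X)
  refine ⟨IsRegularEpi.desc (adj.counit.app X) (F.map f ≫ adj.counit.app Y) ?_, ?_⟩
  · apply G.map_injective
    simp only [G.map_comp, hf, ← G.map_comp_assoc, IsRegularEpi.w]
  · rw [← cancel_epi (G.map (adj.counit.app X)), ← G.map_comp, IsRegularEpi.fac, G.map_comp, hf]

lemma comparison_full_of_faithful [G.Faithful] [IsRegularEpiCategory D] :
    (comparison adj).Full where
  map_surjective {X Y} f := by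
    obtain ⟨g, hg⟩ := exists_map_eq_of_comp_counit adj f.f f.h
    exact ⟨g, Algebra.Hom.ext hg⟩

section EssSurj

variable {A : C} (a : G.obj (F.obj A) ⟶ A) [HasCoequalizer (F.map a) (adj.counit.app (F.obj A))]

lemma comp_unit_app_comp_map_coequalizer_π :
    a ≫ adj.unit.app A ≫ G.map (coequalizer.π (F.map a) (adj.counit.app (F.obj A))) =
      G.map (coequalizer.π (F.map a) (adj.counit.app (F.obj A))) := by
  rw [← adj.unit_naturality_assoc, ← G.map_comp, coequalizer.condition, G.map_comp,
    adj.right_triangle_components_assoc]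

lemma map_map_unit_app_comp_map_coequalizer_π_comp_map_counit_app :
    G.map (F.map (adj.unit.app A ≫ G.map (coequalizer.π (F.map a) (adj.counit.app (F.obj A))))) ≫
        G.map (adj.counit.app (coequalizer (F.map a) (adj.counit.app (F.obj A)))) =
      G.map (coequalizer.π (F.map a) (adj.counit.app (F.obj A))) := by
  rw [← G.map_comp, F.map_comp, Category.assoc]
  erw [adj.counit_naturality, adj.left_triangle_components_assoc]

variable [PreservesColimit (parallelPair (F.map a) (adj.counit.app (F.obj A))) G]
  (assoc : G.map (F.map a) ≫ a = G.map (adj.counit.app (F.obj A)) ≫ a)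

lemma map_coequalizer_π_comp_desc :
    G.map (coequalizer.π (F.map a) (adj.counit.app (F.obj A))) ≫ Cofork.IsColimit.desc
      (isColimitOfHasCoequalizerOfPreservesColimit G _ _) a assoc = a :=
  Cofork.IsColimit.π_desc' (isColimitOfHasCoequalizerOfPreservesColimit G _ _) a assoc

noncomputable def isoMapCoequalizer (unit : adj.unit.app A ≫ a = 𝟙 A) :
    A ≅ G.obj (coequalizer (F.map a) (adj.counit.app (F.obj A))) where
  hom := adj.unit.app A ≫ G.map (coequalizer.π (F.map a) (adj.counit.app (F.obj A)))
  inv := Cofork.IsColimit.desc (isColimitOfHasCoequalizerOfPreservesColimit G _ _) a assoc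
  hom_inv_id := by
    rw [Category.assoc, map_coequalizer_π_comp_desc, unit]
  inv_hom_id := by
    apply Cofork.IsColimit.hom_ext (isColimitOfHasCoequalizerOfPreservesColimit G _ _)
    dsimp only [Cofork.π_ofπ]
    rw [reassoc_of% map_coequalizer_π_comp_desc, comp_unit_app_comp_map_coequalizer_π]
    exact (Category.comp_id _).symm

end EssSurj

section

variable [HasCoequalizers D] [PreservesColimitsOfShape WalkingParallelPair G]

noncomputable def isoComparisonObjCoequalizer (X : adj.toMonad.Algebra) :
    X ≅ (comparison adj).obj (coequalizer (F.map X.a) (adj.counit.app (F.obj X.A))) :=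
  Algebra.isoMk (isoMapCoequalizer adj X.a X.assoc.symm X.unit) <|
    (map_map_unit_app_comp_map_coequalizer_π_comp_map_counit_app adj X.a).trans
      (comp_unit_app_comp_map_coequalizer_π adj X.a).symm

lemma comparison_essSurj : (comparison adj).EssSurj :=
  ⟨fun X => ⟨_, ⟨(isoComparisonObjCoequalizer adj X).symm⟩⟩⟩

end

end CategoryTheory.Monad

theorem monadicity_for_abelian_categories_general
    {A : Type*} [Category A] {B : Type*} [Category B] [Abelian B]
    (F : A ⥤ B) (U : B ⥤ A)
    [PreservesFiniteColimits U]
    (adj : F ⊣ U) :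
    (Monad.comparison adj).IsEquivalence ↔ U.Faithful := by
  refine ⟨fun _ => Monad.faithful_of_comparison_faithful adj, fun _ => ?_⟩
  have := Monad.comparison_full_of_faithful adj
  have := Monad.comparison_essSurj adj
  exact { }

/-- **Beck's monadicity theorem for abelian categories.**
Let `F : A ⥤ B` be an additive functor between abelian categories which admits a right
adjoint `U : B ⥤ A` that is exact, and let `M = UF` be the monad on `A` defined by this
adjoint pair.  Then the comparison functor `K : B ⥤ M-Mod_A` is an equivalence of
categories if and only if the functor `U` is faithful. -/
theorem monadicity_for_abelian_categories
    {A : Type*} [Category A] [Abelian A] {B : Type*} [Category B] [Abelian B]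
    (F : A ⥤ B) [F.Additive] (U : B ⥤ A)
    [PreservesFiniteLimits U] [PreservesFiniteColimits U]
    (adj : F ⊣ U) :
    (Monad.comparison adj).IsEquivalence ↔ U.Faithful :=
  monadicity_for_abelian_categories_general F U adj
end

section
/- Let F : A → A' be an exact functor between abelian categories that is a quotient functor, and let N ⊆ A and N' ⊆ A' be Serre subcategories with F(N) ⊆ N'. Then the induced exact functor F̄ : A/N → A'/N' is also a quotient functor. -/
open CategoryTheory CategoryTheory.Limits

universe v u v' u' v'' u''

/-- A predicate on the objects of an abelian category is a *Serre class* (determines a Serre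
subcategory) if it is closed under isomorphisms, contains the zero objects, and, for every
short exact sequence `0 ⟶ X₁ ⟶ X₂ ⟶ X₃ ⟶ 0`, the middle term satisfies it iff the two outer
terms do (closure under subobjects, quotient objects and extensions). -/
structure IsSerreClass {A : Type u} [Category.{v} A] [Abelian A] (N : A → Prop) : Prop where
  prop_of_iso : ∀ {X Y : A}, (X ≅ Y) → N X → N Y
  prop_of_isZero : ∀ X : A, IsZero X → N X
  prop_ses : ∀ S : ShortComplex A, S.ShortExact → (N S.X₂ ↔ N S.X₁ ∧ N S.X₃)

/-- The class of morphisms inverted by a functor. -/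
def invertedClass {A : Type u} [Category.{v} A] {B : Type u'} [Category.{v'} B]
    (F : A ⥤ B) : MorphismProperty A :=
  fun _ _ f => IsIso (F.map f)

/-- `q : A ⥤ D` realizes `D` as the Gabriel quotient `A/N` of the abelian category `A` by the
Serre subcategory `N`: it is exact, has essential kernel exactly `N`, and is a localization at
the class of morphisms it inverts (for an exact functor this class consists of the morphisms
whose kernel and cokernel lie in `N`). -/
structure IsQuotientBy {A : Type u} [Category.{v} A] {D : Type u'} [Category.{v'} D]
    (N : A → Prop) (q : A ⥤ D) : Prop where
  preservesFiniteLimits : PreservesFiniteLimits q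
  preservesFiniteColimits : PreservesFiniteColimits q
  essKernel : ∀ X : A, IsZero (q.obj X) ↔ N X
  isLocalization : q.IsLocalization (invertedClass q)

/-- An exact functor `F` between abelian categories is a *quotient functor* if the induced
functor from the Gabriel quotient of its source by its essential kernel is an equivalence;
equivalently, `F` realizes its target as the Gabriel quotient by its essential kernel. -/
def IsQuotientFunctor {A : Type u} [Category.{v} A] {B : Type u'} [Category.{v'} B]
    (F : A ⥤ B) : Prop :=
  IsQuotientBy (fun X => IsZero (F.obj X)) F

/-!
Quotient functors are closed under composition and isomorphism, and if `L` and `L ⋙ G` are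
quotient functors then so is `G`. Applied to `qA ⋙ F̄ ≅ F ⋙ qA'` this gives the theorem.
Left cancellation rests on the calculus of fractions of a Serre localization: every arrow of the
target of a quotient functor is isomorphic to the image of an arrow, so exactness of `L ⋙ G`
descends to `G`, and the morphisms inverted by `G` are exactly the images of those inverted by
`L ⋙ G`, which makes `G` a localization by the composition theorem for localizations.
-/

namespace CategoryTheory.MorphismProperty

lemma map_inverseImage_eq_of_essSurj_mapArrow {C : Type*} [Category C] {D : Type*} [Category D]
    (P : MorphismProperty D) [P.RespectsIso] (L : C ⥤ D) [L.mapArrow.EssSurj] :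
    (P.inverseImage L).map L = P := by
  refine le_antisymm ((map_le_iff _ _).2 le_rfl) fun _ _ f hf => ?_
  let e := L.mapArrow.objObjPreimageIso (CategoryTheory.Arrow.mk f)
  exact ⟨_, _, _, (P.arrow_mk_iso_iff e).2 hf, ⟨e⟩⟩

end CategoryTheory.MorphismProperty

section InvertedClass

variable {C₁ : Type*} [Category C₁] {C₂ : Type*} [Category C₂] {C₃ : Type*} [Category C₃]

lemma invertedClass_eq_of_iso {F G : C₁ ⥤ C₂} (e : F ≅ G) : invertedClass F = invertedClass G := by
  ext _ _ f
  exact NatIso.isIso_map_iff e f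

lemma le_invertedClass (L : C₁ ⥤ C₂) (W : MorphismProperty C₁) [L.IsLocalization W] :
    W ≤ invertedClass L :=
  Localization.inverts L W

lemma invertedClass_le_invertedClass_comp (F : C₁ ⥤ C₂) (G : C₂ ⥤ C₃) :
    invertedClass F ≤ invertedClass (F ⋙ G) :=
  fun _ _ f (_ : IsIso (F.map f)) => (inferInstance : IsIso (G.map (F.map f)))

lemma map_invertedClass_comp (L : C₁ ⥤ C₂) (G : C₂ ⥤ C₃) [L.mapArrow.EssSurj] :
    (invertedClass (L ⋙ G)).map L = invertedClass G :=
  ((MorphismProperty.isomorphisms C₃).inverseImage G).map_inverseImage_eq_of_essSurj_mapArrow L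

lemma isLocalization_invertedClass_comp (L₁ : C₁ ⥤ C₂) (L₂ : C₂ ⥤ C₃)
    (W₁ : MorphismProperty C₁) (W₂ : MorphismProperty C₂) [L₁.IsLocalization W₁]
    [L₂.IsLocalization W₂] [L₁.mapArrow.EssSurj] :
    (L₁ ⋙ L₂).IsLocalization (invertedClass (L₁ ⋙ L₂)) :=
  Functor.IsLocalization.comp L₁ L₂ W₁ W₂ _ (fun _ _ _ hf => hf)
    ((le_invertedClass L₁ W₁).trans (invertedClass_le_invertedClass_comp L₁ L₂))
    (map_invertedClass_comp L₁ L₂ ▸ le_invertedClass L₂ W₂)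

lemma isLocalization_invertedClass_of_comp (L : C₁ ⥤ C₂) (G : C₂ ⥤ C₃)
    (W : MorphismProperty C₁) [L.IsLocalization W] [L.mapArrow.EssSurj]
    [(L ⋙ G).IsLocalization (invertedClass (L ⋙ G))] :
    G.IsLocalization (invertedClass G) :=
  Functor.IsLocalization.of_comp L G W _ _
    ((le_invertedClass L W).trans (invertedClass_le_invertedClass_comp L G))
    (map_invertedClass_comp L G).symm

end InvertedClass

lemma CategoryTheory.Functor.isLocalization_isoModSerre_kernel
    {A : Type*} [Category A] [Abelian A] {B : Type*} [Category B] [Abelian B]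
    (F : A ⥤ B) [PreservesFiniteLimits F]
    [PreservesFiniteColimits F] [F.IsLocalization (invertedClass F)] :
    F.IsLocalization F.kernel.isoModSerre := by
  rwa [Abelian.isoModSerre_kernel_eq_inverseImage_isomorphisms]

lemma IsQuotientBy.isQuotientFunctor {A : Type*} [Category A] {D : Type*} [Category D]
    {N : A → Prop} {q : A ⥤ D} (h : IsQuotientBy N q) : IsQuotientFunctor q :=
  ⟨h.preservesFiniteLimits, h.preservesFiniteColimits, fun _ => Iff.rfl, h.isLocalization⟩

namespace IsQuotientFunctor

lemma of_iso {A : Type*} [Category A] {B : Type*} [Category B] {F G : A ⥤ B}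
    (hF : IsQuotientFunctor F) (e : F ≅ G) : IsQuotientFunctor G := by
  have := hF.preservesFiniteLimits
  have := hF.preservesFiniteColimits
  have := hF.isLocalization
  refine ⟨preservesFiniteLimits_of_natIso e, preservesFiniteColimits_of_natIso e,
    fun _ => Iff.rfl, ?_⟩
  rw [← invertedClass_eq_of_iso e]
  exact Functor.IsLocalization.of_iso _ e

variable {A : Type*} [Category A] [Abelian A] {B : Type*} [Category B] [Abelian B]
  {C : Type*} [Category C]

lemma essSurj_mapArrow {F : A ⥤ B} (hF : IsQuotientFunctor F) : F.mapArrow.EssSurj := by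
  have := hF.preservesFiniteLimits
  have := hF.preservesFiniteColimits
  have := hF.isLocalization
  have := F.isLocalization_isoModSerre_kernel
  exact Localization.essSurj_mapArrow F F.kernel.isoModSerre

lemma comp {F : A ⥤ B} {G : B ⥤ C} (hF : IsQuotientFunctor F) (hG : IsQuotientFunctor G) :
    IsQuotientFunctor (F ⋙ G) := by
  have := hF.preservesFiniteLimits
  have := hF.preservesFiniteColimits
  have := hG.preservesFiniteLimits
  have := hG.preservesFiniteColimits
  have := hF.isLocalization
  have := hG.isLocalization
  have := hF.essSurj_mapArrow
  exact ⟨inferInstance, inferInstance, fun _ => Iff.rfl,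
    isLocalization_invertedClass_comp F G (invertedClass F) (invertedClass G)⟩

lemma of_comp [Abelian C] {L : A ⥤ B} {G : B ⥤ C} (hL : IsQuotientFunctor L)
    (hLG : IsQuotientFunctor (L ⋙ G)) : IsQuotientFunctor G := by
  have := hL.preservesFiniteLimits
  have := hL.preservesFiniteColimits
  have := hL.isLocalization
  have := L.isLocalization_isoModSerre_kernel
  have := hL.essSurj_mapArrow
  have := hLG.isLocalization
  have : L.Additive := L.additive_of_preserves_binary_products
  exact ⟨(ObjectProperty.SerreClassLocalization.preservesFiniteLimits_comp_iff L L.kernel G).1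
      hLG.preservesFiniteLimits,
    (ObjectProperty.SerreClassLocalization.preservesFiniteColimits_comp_iff L L.kernel G).1
      hLG.preservesFiniteColimits,
    fun _ => Iff.rfl, isLocalization_invertedClass_of_comp L G (invertedClass L)⟩

end IsQuotientFunctor

theorem induced_functor_on_quotients_is_quotient_functor_general
    {A : Type u} [Category.{v} A] [Abelian A]
    {A' : Type u'} [Category.{v'} A'] [Abelian A']
    (F : A ⥤ A')
    (hF : IsQuotientFunctor F)
    (N : A → Prop) (N' : A' → Prop)
    {D : Type u} [Category.{v} D] [Abelian D]
    {D' : Type u'} [Category.{v'} D'] [Abelian D']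
    (qA : A ⥤ D) (hqA : IsQuotientBy N qA)
    (qA' : A' ⥤ D') (hqA' : IsQuotientBy N' qA')
    (Fbar : D ⥤ D') (e : qA ⋙ Fbar ≅ F ⋙ qA') :
    IsQuotientFunctor Fbar :=
  hqA.isQuotientFunctor.of_comp ((hF.comp hqA'.isQuotientFunctor).of_iso e.symm)

/-- **Quotient functors pass to quotient categories.**
Let `F : A ⥤ A'` be an exact functor between abelian categories which is a quotient functor,
and let `N ⊆ A`, `N' ⊆ A'` be Serre subcategories with `F(N) ⊆ N'`.  Then the induced exact
functor `F̄ : A/N ⥤ A'/N'` (characterized by `qA ⋙ F̄ ≅ F ⋙ qA'`, where `qA`, `qA'` are the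
quotient functors) is also a quotient functor. -/
theorem induced_functor_on_quotients_is_quotient_functor
    {A : Type u} [Category.{v} A] [Abelian A]
    {A' : Type u'} [Category.{v'} A'] [Abelian A']
    (F : A ⥤ A') [PreservesFiniteLimits F] [PreservesFiniteColimits F]
    (hF : IsQuotientFunctor F)
    (N : A → Prop) (N' : A' → Prop) (hN : IsSerreClass N) (hN' : IsSerreClass N')
    (hFN : ∀ X : A, N X → N' (F.obj X))
    {D : Type u} [Category.{v} D] [Abelian D]
    {D' : Type u'} [Category.{v'} D'] [Abelian D']
    (qA : A ⥤ D) (hqA : IsQuotientBy N qA)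
    (qA' : A' ⥤ D') (hqA' : IsQuotientBy N' qA')
    (Fbar : D ⥤ D') (e : qA ⋙ Fbar ≅ F ⋙ qA') :
    IsQuotientFunctor Fbar :=
  induced_functor_on_quotients_is_quotient_functor_general F hF N N' qA hqA qA' hqA' Fbar e
end

section
/- Let F : A → A' be an exact functor between abelian categories with an exact right adjoint U : A' → A, and let N ⊆ A and N' ⊆ A' be Serre subcategories with F(N) ⊆ N' and U(N') ⊆ N. Then: (1) the induced functor F̄ : A/N → A'/N' is left adjoint to the induced functor Ū : A'/N' → A/N; (2) the monad on A/N defined by the adjoint pair (F̄, Ū) coincides with the monad on A/N induced by the monad on A defined by (F, U); (3) if moreover the inverse image U^{-1}(N) equals N', then Ū is faithful. -/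
open CategoryTheory CategoryTheory.Limits

universe v u v' u' v'' u''

/-- **Adjoint pairs descend to quotient categories.**
Let `F : A ⥤ A'` be an exact functor between abelian categories with an exact right adjoint
`U`, and let `N ⊆ A`, `N' ⊆ A'` be Serre subcategories with `F(N) ⊆ N'` and `U(N') ⊆ N`.
Let `F̄ : A/N ⥤ A'/N'` and `Ū : A'/N' ⥤ A/N` be the induced functors.  Then:
(1) `F̄` is left adjoint to `Ū`;
(2) the monad on `A/N` defined by the adjoint pair `(F̄, Ū)` coincides with the monad induced
    on `A/N` by the monad `UF` defined by `(F, U)` (its unit and multiplication are the images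
    under the quotient functor of those of `UF`);
(3) if moreover `U⁻¹(N) = N'` then `Ū` is faithful. -/
theorem adjoint_pair_descends_to_quotients
    {A : Type u} [Category.{v} A] [Abelian A]
    {A' : Type u'} [Category.{v'} A'] [Abelian A']
    (F : A ⥤ A') [PreservesFiniteLimits F] [PreservesFiniteColimits F]
    (U : A' ⥤ A) [PreservesFiniteLimits U] [PreservesFiniteColimits U]
    (adj : F ⊣ U)
    (N : A → Prop) (N' : A' → Prop) (hN : IsSerreClass N) (hN' : IsSerreClass N')
    (hFN : ∀ X : A, N X → N' (F.obj X)) (hUN' : ∀ Y : A', N' Y → N (U.obj Y))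
    {D : Type u} [Category.{v} D] [Abelian D]
    {D' : Type u'} [Category.{v'} D'] [Abelian D']
    (qA : A ⥤ D) (hqA : IsQuotientBy N qA)
    (qA' : A' ⥤ D') (hqA' : IsQuotientBy N' qA')
    (Fbar : D ⥤ D') (eF : qA ⋙ Fbar ≅ F ⋙ qA')
    (Ubar : D' ⥤ D) (eU : qA' ⋙ Ubar ≅ U ⋙ qA) :
    Nonempty (Fbar ⊣ Ubar) ∧
    (∃ adjbar : Fbar ⊣ Ubar,
      (∀ X : A,
        adjbar.unit.app (qA.obj X) ≫ Ubar.map (eF.hom.app X) ≫ eU.hom.app (F.obj X) =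
          qA.map (adj.unit.app X)) ∧
      (∀ X : A,
        Ubar.map (adjbar.counit.app (Fbar.obj (qA.obj X))) ≫
            Ubar.map (eF.hom.app X) ≫ eU.hom.app (F.obj X) =
          Ubar.map (Fbar.map (Ubar.map (eF.hom.app X) ≫ eU.hom.app (F.obj X))) ≫
            (Ubar.map (eF.hom.app (U.obj (F.obj X))) ≫
              eU.hom.app (F.obj (U.obj (F.obj X)))) ≫
            qA.map (U.map (adj.counit.app (F.obj X))))) ∧
    ((∀ Y : A', N (U.obj Y) ↔ N' Y) → Ubar.Faithful) := by
  haveI := hqA.isLocalization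
  haveI := hqA'.isLocalization
  haveI := hqA.preservesFiniteLimits
  haveI := hqA.preservesFiniteColimits
  haveI := hqA'.preservesFiniteLimits
  haveI := hqA'.preservesFiniteColimits
  letI : CatCommSq F qA qA' Fbar := ⟨eF.symm⟩
  letI : CatCommSq U qA' qA Ubar := ⟨eU.symm⟩
  have hsqF : CatCommSq.iso F qA qA' Fbar = eF.symm := rfl
  have hsqU : CatCommSq.iso U qA' qA Ubar = eU.symm := rfl
  set adjbar : Fbar ⊣ Ubar :=
    adj.localization qA (invertedClass qA) qA' (invertedClass qA') Fbar Ubar with hadjbar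
  have unit_app : ∀ X : A, adjbar.unit.app (qA.obj X) =
      qA.map (adj.unit.app X) ≫ eU.inv.app (F.obj X) ≫ Ubar.map (eF.inv.app X) := by
    intro X
    rw [hadjbar, adj.localization_unit_app, hsqF, hsqU]
    rfl
  have counit_app : ∀ Y : A', adjbar.counit.app (qA'.obj Y) =
      Fbar.map (eU.hom.app Y) ≫ eF.hom.app (U.obj Y) ≫ qA'.map (adj.counit.app Y) := by
    intro Y
    rw [hadjbar, adj.localization_counit_app, hsqF, hsqU]
    rfl
  refine ⟨⟨adjbar⟩, ⟨adjbar, ?_, ?_⟩, ?_⟩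
  · -- the unit of the induced adjunction is induced by the unit of `adj`
    intro X
    rw [unit_app X]
    simp only [Category.assoc, ← Functor.map_comp_assoc, Iso.inv_hom_id_app]
    simp
  · -- the counit compatibility (multiplication of the induced monad)
    intro X
    have h1 : adjbar.counit.app (Fbar.obj (qA.obj X)) ≫ eF.hom.app X =
        Fbar.map (Ubar.map (eF.hom.app X)) ≫ adjbar.counit.app (qA'.obj (F.obj X)) :=
      (adjbar.counit.naturality (eF.hom.app X)).symm
    have h2 : Ubar.map (qA'.map (adj.counit.app (F.obj X))) ≫ eU.hom.app (F.obj X) =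
        eU.hom.app (F.obj (U.obj (F.obj X))) ≫ qA.map (U.map (adj.counit.app (F.obj X))) :=
      eU.hom.naturality _
    rw [← Category.assoc, ← Ubar.map_comp, h1, counit_app]
    simp only [Functor.map_comp, Category.assoc, h2]
  · -- faithfulness of `Ubar` when `U⁻¹(N) = N'`
    intro hinv
    have epi_counit : ∀ Y : A', Epi (adjbar.counit.app (qA'.obj Y)) := by
      intro Y
      rw [counit_app Y]
      have hsplit : adj.unit.app (U.obj Y) ≫ U.map (adj.counit.app Y) = 𝟙 _ :=
        adj.right_triangle_components Y
      haveI : Epi (U.map (adj.counit.app Y)) := epi_of_epi_fac hsplit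
      have hzU : IsZero (U.obj (cokernel (adj.counit.app Y))) :=
        (isZero_zero A).of_iso (PreservesCokernel.iso U _ ≪≫ cokernel.ofEpi _)
      have hN'c : N' (cokernel (adj.counit.app Y)) :=
        (hinv _).mp (hN.prop_of_isZero _ hzU)
      have hzq : IsZero (cokernel (qA'.map (adj.counit.app Y))) :=
        ((hqA'.essKernel _).mpr hN'c).of_iso (PreservesCokernel.iso qA' _).symm
      haveI : Epi (qA'.map (adj.counit.app Y)) :=
        Abelian.epi_of_cokernel_π_eq_zero _ (hzq.eq_of_tgt _ _)
      exact epi_comp _ _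
    haveI := Localization.essSurj qA' (invertedClass qA')
    haveI : ∀ Z : D', Epi (adjbar.counit.app Z) := by
      intro Z
      obtain ⟨Y, ⟨e⟩⟩ : ∃ Y, Nonempty (qA'.obj Y ≅ Z) :=
        ⟨_, ⟨qA'.objObjPreimageIso Z⟩⟩
      haveI := epi_counit Y
      have hnat : Fbar.map (Ubar.map e.hom) ≫ adjbar.counit.app Z =
          adjbar.counit.app (qA'.obj Y) ≫ e.hom := adjbar.counit.naturality e.hom
      have : adjbar.counit.app Z =
          inv (Fbar.map (Ubar.map e.hom)) ≫ adjbar.counit.app (qA'.obj Y) ≫ e.hom := by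
        rw [← hnat]; simp
      rw [this]
      infer_instance
    exact adjbar.faithful_R_of_epi_counit_app
end
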